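/- arXiv:2205.03570 — 2 statements merged into one kernel-verified Lean document; each statement's English description precedes it below -/
import Mathlib

section
/- Let (x, s) ∈ int(K) × int(K) and μ = xᵀs/k. Then ‖w_{xs} − μe‖ ≤ ‖(D^{−T}x) ∘ (Ds) − μe‖ for every D ∈ G, and equality is attained for some D ∈ G; i.e., ‖w_{xs} − μe‖ = min over D ∈ G of ‖(D^{−T}x) ∘ (Ds) − μe‖. -/
open scoped BigOperators
open Matrix

namespace SOCP

/-- Index type for a block vector with `k` blocks, block `i` having dimension `d i + 1`. -/
abbrev Idx {k : ℕ} (d : Fin k → ℕ) : Type := (i : Fin k) × Fin (d i + 1)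

/-- The `i`-th block of a block vector. -/
def blk {k : ℕ} {d : Fin k → ℕ} (v : Idx d → ℝ) (i : Fin k) : Fin (d i + 1) → ℝ :=
  fun j => v ⟨i, j⟩

/-- Squared Euclidean norm of the tail `u_{2:m}` of a single block. -/
def tailNormSq {m : ℕ} (u : Fin (m + 1) → ℝ) : ℝ := ∑ j : Fin m, u j.succ ^ 2

/-- Euclidean norm of the tail `u_{2:m}` of a single block. -/
noncomputable def tailNorm {m : ℕ} (u : Fin (m + 1) → ℝ) : ℝ := Real.sqrt (tailNormSq u)

/-- Membership in the cone `K` (a direct product of second-order cones). -/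
def inK {k : ℕ} {d : Fin k → ℕ} (v : Idx d → ℝ) : Prop :=
  ∀ i : Fin k, tailNorm (blk v i) ≤ v ⟨i, 0⟩

/-- Membership in the interior of the cone `K`. -/
def inIntK {k : ℕ} {d : Fin k → ℕ} (v : Idx d → ℝ) : Prop :=
  ∀ i : Fin k, tailNorm (blk v i) < v ⟨i, 0⟩

/-- Euclidean inner product of vectors. -/
def dotV {ι : Type*} [Fintype ι] (u v : ι → ℝ) : ℝ := ∑ a, u a * v a

/-- Euclidean norm of a vector. -/
noncomputable def vnorm {ι : Type*} [Fintype ι] (v : ι → ℝ) : ℝ :=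
  Real.sqrt (∑ a, v a ^ 2)

/-- Blockwise Jordan product. -/
def jmul {k : ℕ} {d : Fin k → ℕ} (u v : Idx d → ℝ) : Idx d → ℝ := fun a =>
  if a.2 = 0 then ∑ j, u ⟨a.1, j⟩ * v ⟨a.1, j⟩
  else u ⟨a.1, 0⟩ * v a + v ⟨a.1, 0⟩ * u a

/-- The unit element `e` of the Jordan algebra. -/
def unitE {k : ℕ} {d : Fin k → ℕ} : Idx d → ℝ := fun a => if a.2 = 0 then 1 else 0

/-- `λ_min` of the `i`-th block. -/
noncomputable def lamMin {k : ℕ} {d : Fin k → ℕ} (v : Idx d → ℝ) (i : Fin k) : ℝ :=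
  v ⟨i, 0⟩ - tailNorm (blk v i)

/-- `λ_max` of the `i`-th block. -/
noncomputable def lamMax {k : ℕ} {d : Fin k → ℕ} (v : Idx d → ℝ) (i : Fin k) : ℝ :=
  v ⟨i, 0⟩ + tailNorm (blk v i)

/-- Arrow-head matrix of a single block. -/
def arrowBlk {m : ℕ} (u : Fin (m + 1) → ℝ) : Matrix (Fin (m + 1)) (Fin (m + 1)) ℝ :=
  Matrix.of fun j j' =>
    if j = 0 then u j' else if j' = 0 then u j else if j = j' then u 0 else 0

/-- Arrow-head matrix `mat(v)` (block diagonal). -/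
def matV {k : ℕ} {d : Fin k → ℕ} (v : Idx d → ℝ) : Matrix (Idx d) (Idx d) ℝ :=
  Matrix.blockDiagonal' fun i => arrowBlk (blk v i)

/-- `β_u = sqrt(u_1^2 - ‖u_{2:m}‖^2)` for a single block. -/
noncomputable def betaOf {m : ℕ} (u : Fin (m + 1) → ℝ) : ℝ :=
  Real.sqrt (u 0 ^ 2 - tailNormSq u)

/-- The matrix `T_u` for a single block. -/
noncomputable def Tblk {m : ℕ} (u : Fin (m + 1) → ℝ) :
    Matrix (Fin (m + 1)) (Fin (m + 1)) ℝ :=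
  Matrix.of fun j j' =>
    if j = 0 then u j'
    else if j' = 0 then u j
    else (if j = j' then betaOf u else 0) + u j * u j' / (betaOf u + u 0)

/-- The matrix `T_x` (block diagonal). -/
noncomputable def TV {k : ℕ} {d : Fin k → ℕ} (x : Idx d → ℝ) :
    Matrix (Idx d) (Idx d) ℝ :=
  Matrix.blockDiagonal' fun i => Tblk (blk x i)

/-- `w_{xs} = T_x s`. -/
noncomputable def wxs {k : ℕ} {d : Fin k → ℕ} (x s : Idx d → ℝ) : Idx d → ℝ :=
  (TV x).mulVec s

/-- Central-path coefficient `μ(x,s) = xᵀs/k`. -/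
noncomputable def muV {k : ℕ} {d : Fin k → ℕ} (x s : Idx d → ℝ) : ℝ :=
  dotV x s / (k : ℝ)

/-- Central-path distance `d_2(x,s) = √2 ‖w_{xs} - μ e‖`. -/
noncomputable def d2 {k : ℕ} {d : Fin k → ℕ} (x s : Idx d → ℝ) : ℝ :=
  Real.sqrt 2 * vnorm (wxs x s - muV x s • unitE)

/-- Central-path distance `d_∞(x,s)`. -/
noncomputable def dInf {k : ℕ} {d : Fin k → ℕ} (x s : Idx d → ℝ) : ℝ :=
  ⨆ i : Fin k, max |lamMax (wxs x s) i - muV x s| |lamMin (wxs x s) i - muV x s|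

/-- The matrix `Q = diag(1, -I)` for a single block. -/
def Qblk {m : ℕ} : Matrix (Fin (m + 1)) (Fin (m + 1)) ℝ :=
  Matrix.of fun j j' => if j = j' then (if j = 0 then (1 : ℝ) else -1) else 0

/-- The scaling group `G` of block matrices `Θ G` with `(Gⁱ)ᵀ Qⁱ Gⁱ = Qⁱ`. -/
def scalingGroup {k : ℕ} (d : Fin k → ℕ) : Set (Matrix (Idx d) (Idx d) ℝ) :=
  { D | ∃ (θ : Fin k → ℝ) (G : ∀ i, Matrix (Fin (d i + 1)) (Fin (d i + 1)) ℝ),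
      (∀ i, 0 < θ i) ∧ (∀ i, (G i)ᵀ * Qblk * G i = Qblk) ∧
      D = Matrix.blockDiagonal' fun i => θ i • G i }

/-- Operator 2-norm of a matrix. -/
noncomputable def op2 {m n : Type*} [Fintype m] [Fintype n] [DecidableEq n]
    (M : Matrix m n ℝ) : ℝ :=
  ‖LinearMap.toContinuousLinearMap (Matrix.toEuclideanLin M)‖

/-- `R_{xs} = T_x X⁻¹ S T_x`. -/
noncomputable def Rxs {k : ℕ} {d : Fin k → ℕ} (x s : Idx d → ℝ) :
    Matrix (Idx d) (Idx d) ℝ :=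
  TV x * (matV x)⁻¹ * matV s * TV x

/-- The scaled Newton system of the infeasible IPM (Monteiro–Zhang family). -/
def NewtonSys {k p : ℕ} {d : Fin k → ℕ} (A : Matrix (Fin p) (Idx d) ℝ)
    (Cm : Matrix (Idx d) (Idx d) ℝ) (x : Idx d → ℝ) (y : Fin p → ℝ) (s : Idx d → ℝ)
    (ν : ℝ) (D : Matrix (Idx d) (Idx d) ℝ)
    (dx : Idx d → ℝ) (dy : Fin p → ℝ) (ds : Idx d → ℝ) : Prop :=
  A.mulVec dx = -((1 - ν) • A.mulVec x) ∧
  Aᵀ.mulVec dy + Cm.mulVec dx + ds =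
    -((1 - ν) • (Aᵀ.mulVec y + Cm.mulVec x + s)) ∧
  (matV ((D⁻¹)ᵀ.mulVec x)).mulVec (D.mulVec ds)
      + (matV (D.mulVec s)).mulVec ((D⁻¹)ᵀ.mulVec dx)
    = (ν * muV x s) • unitE - jmul ((D⁻¹)ᵀ.mulVec x) (D.mulVec s)

/-- Central-path neighborhood `N_2(γ)`. -/
def N2 {k : ℕ} (d : Fin k → ℕ) (p : ℕ) (γ : ℝ) :
    Set ((Idx d → ℝ) × (Fin p → ℝ) × (Idx d → ℝ)) :=
  { z | inIntK z.1 ∧ inIntK z.2.2 ∧ d2 z.1 z.2.2 ≤ γ * muV z.1 z.2.2 }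

/-- Central-path neighborhood `N_∞(γ)`. -/
def NInf {k : ℕ} (d : Fin k → ℕ) (p : ℕ) (γ : ℝ) :
    Set ((Idx d → ℝ) × (Fin p → ℝ) × (Idx d → ℝ)) :=
  { z | inIntK z.1 ∧ inIntK z.2.2 ∧ dInf z.1 z.2.2 ≤ γ * muV z.1 z.2.2 }

/-- The matrix `U_u` for a single block: zero first row and column and lower-right block
`(u_1 - β_u) P_u`, with `P_u` the projection onto the complement of the tail of `u`
(zero when the tail vanishes). -/
noncomputable def Ublk {m : ℕ} (u : Fin (m + 1) → ℝ) :
    Matrix (Fin (m + 1)) (Fin (m + 1)) ℝ :=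
  Matrix.of fun j j' =>
    if j = 0 ∨ j' = 0 then 0
    else if tailNormSq u = 0 then 0
    else (u 0 - betaOf u) * ((if j = j' then (1 : ℝ) else 0) - u j * u j' / tailNormSq u)

/-- The block-diagonal matrix `U_x`. -/
noncomputable def UV {k : ℕ} {d : Fin k → ℕ} (x : Idx d → ℝ) :
    Matrix (Idx d) (Idx d) ℝ :=
  Matrix.blockDiagonal' fun i => Ublk (blk x i)

/-- `Γ_p = 2 (γ²/2 + (1-ν)² k)^{1/2} / (1 - 3γ)`. -/
noncomputable def GammaP (γ ν : ℝ) (k : ℕ) : ℝ :=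
  2 * Real.sqrt (γ ^ 2 / 2 + (1 - ν) ^ 2 * k) / (1 - 3 * γ)

/-- `Γ̃ = (4(γ² + δ²)/(1-3γ)²) (1 - δ/√(2k))⁻¹`. -/
noncomputable def GammaTilde (γ δ : ℝ) (k : ℕ) : ℝ :=
  4 * (γ ^ 2 + δ ^ 2) / (1 - 3 * γ) ^ 2 * (1 - δ / Real.sqrt (2 * k))⁻¹

/-!
Write `det u = u₁² - ‖u_{2:m}‖² = uᵀ Q u` (`lorentzForm u`). For `p = D⁻ᵀ x` and `q = D s` with
`D ∈ G`, every block satisfies `pᵢᵀ qᵢ = xᵢᵀ sᵢ` and `det pᵢ · det qᵢ = det xᵢ · det sᵢ`. The first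
entry of `pᵢ ∘ qᵢ` is `pᵢᵀ qᵢ`, and Cauchy–Schwarz on the tails gives
`det (pᵢ ∘ qᵢ) ≤ det pᵢ · det qᵢ`, so `‖pᵢ ∘ qᵢ‖² = 2 (pᵢᵀ qᵢ)² - det (pᵢ ∘ qᵢ)` is at least
`2 (xᵢᵀ sᵢ)² - det xᵢ · det sᵢ`. As `‖z - μe‖² = ∑ᵢ (‖zᵢ‖² - 2 μ zᵢ₁ + μ²)`, it remains to see
that `w_{xs}` attains this bound and is a scaled product: `T_u Q T_u = β_u² Q` gives
`det wᵢ = det xᵢ · det sᵢ` and puts `T_x` in `G`, and `T_x e = x`, so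
`w_{xs} = e ∘ (T_x s) = (T_x⁻ᵀ x) ∘ (T_x s)`.
-/

section Block

variable {m : ℕ}

def tailDot (u v : Fin (m + 1) → ℝ) : ℝ := ∑ j : Fin m, u j.succ * v j.succ

def lorentzForm (u : Fin (m + 1) → ℝ) : ℝ := u 0 ^ 2 - tailNormSq u

def jordanBlk (u v : Fin (m + 1) → ℝ) : Fin (m + 1) → ℝ :=
  fun j => if j = 0 then u ⬝ᵥ v else u 0 * v j + v 0 * u j

lemma jordanBlk_zero (u v : Fin (m + 1) → ℝ) : jordanBlk u v 0 = u ⬝ᵥ v := if_pos rfl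

lemma dotProduct_eq_mul_add_tailDot (u v : Fin (m + 1) → ℝ) :
    u ⬝ᵥ v = u 0 * v 0 + tailDot u v :=
  Fin.sum_univ_succ _

lemma tailDot_self (u : Fin (m + 1) → ℝ) : tailDot u u = tailNormSq u :=
  Finset.sum_congr rfl fun _ _ => (sq _).symm

lemma sum_sq_eq_two_mul_sq_sub_lorentzForm (u : Fin (m + 1) → ℝ) :
    ∑ j, u j ^ 2 = 2 * u 0 ^ 2 - lorentzForm u := by
  rw [Fin.sum_univ_succ, lorentzForm, tailNormSq]
  ring

lemma lorentzForm_jordanBlk_le (p q : Fin (m + 1) → ℝ) :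
    lorentzForm (jordanBlk p q) ≤ lorentzForm p * lorentzForm q := by
  have htail : tailNormSq (jordanBlk p q) = p 0 ^ 2 * tailNormSq q
      + 2 * p 0 * q 0 * tailDot p q + q 0 ^ 2 * tailNormSq p := by
    simp only [tailNormSq, tailDot, jordanBlk, if_neg (Fin.succ_ne_zero _), Finset.mul_sum,
      ← Finset.sum_add_distrib]
    exact Finset.sum_congr rfl fun _ _ => by ring
  have hcs : tailDot p q ^ 2 ≤ tailNormSq p * tailNormSq q :=
    Finset.sum_mul_sq_le_sq_mul_sq _ _ _
  unfold lorentzForm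
  rw [htail, jordanBlk_zero, dotProduct_eq_mul_add_tailDot]
  nlinarith [hcs]

lemma two_mul_sq_sub_le_sum_sq_jordanBlk (p q : Fin (m + 1) → ℝ) :
    2 * (p ⬝ᵥ q) ^ 2 - lorentzForm p * lorentzForm q ≤ ∑ j, jordanBlk p q j ^ 2 := by
  rw [sum_sq_eq_two_mul_sq_sub_lorentzForm, jordanBlk_zero]
  linarith [lorentzForm_jordanBlk_le p q]

lemma jordanBlk_single_left (q : Fin (m + 1) → ℝ) : jordanBlk (Pi.single 0 1) q = q := by
  ext j
  rcases Fin.eq_zero_or_eq_succ j with rfl | ⟨j, rfl⟩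
  · simp [jordanBlk]
  · simp [jordanBlk, Fin.succ_ne_zero]

end Block

section Lorentz

variable {m : ℕ}

lemma Qblk_eq_diagonal :
    (Qblk : Matrix (Fin (m + 1)) (Fin (m + 1)) ℝ) = diagonal fun j => if j = 0 then 1 else -1 := by
  ext j j'
  by_cases h : j = j' <;> simp [Qblk, h]

lemma Qblk_mul_Qblk : (Qblk : Matrix (Fin (m + 1)) (Fin (m + 1)) ℝ) * Qblk = 1 := by
  rw [Qblk_eq_diagonal, diagonal_mul_diagonal, ← diagonal_one]
  congr 1
  ext j
  split_ifs <;> norm_num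

lemma Qblk_mulVec_apply (v : Fin (m + 1) → ℝ) (j : Fin (m + 1)) :
    (Qblk *ᵥ v) j = if j = 0 then v 0 else -v j := by
  rw [Qblk_eq_diagonal, mulVec_diagonal]
  split_ifs with h
  · rw [h, one_mul]
  · rw [neg_one_mul]

lemma tailDot_Qblk_mulVec (u v : Fin (m + 1) → ℝ) : tailDot u (Qblk *ᵥ v) = -tailDot u v := by
  simp only [tailDot, Qblk_mulVec_apply, if_neg (Fin.succ_ne_zero _), mul_neg,
    Finset.sum_neg_distrib]

lemma lorentzForm_eq_dotProduct (u : Fin (m + 1) → ℝ) : lorentzForm u = u ⬝ᵥ (Qblk *ᵥ u) := by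
  rw [dotProduct_eq_mul_add_tailDot, tailDot_Qblk_mulVec, tailDot_self, Qblk_mulVec_apply,
    if_pos rfl, lorentzForm]
  ring

lemma lorentzForm_mulVec {M : Matrix (Fin (m + 1)) (Fin (m + 1)) ℝ} {c : ℝ}
    (hM : Mᵀ * Qblk * M = c • Qblk) (v : Fin (m + 1) → ℝ) :
    lorentzForm (M *ᵥ v) = c * lorentzForm v := by
  rw [lorentzForm_eq_dotProduct, lorentzForm_eq_dotProduct, dotProduct_comm, dotProduct_mulVec,
    ← mulVec_transpose, mulVec_mulVec, mulVec_mulVec, hM, smul_mulVec,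
    smul_dotProduct, dotProduct_comm, smul_eq_mul]

lemma mul_Qblk_mul_transpose {G : Matrix (Fin (m + 1)) (Fin (m + 1)) ℝ}
    (hG : Gᵀ * Qblk * G = Qblk) : G * Qblk * Gᵀ = Qblk := by
  have hleft : (Qblk * Gᵀ * Qblk) * G = 1 := by
    rw [Matrix.mul_assoc, Matrix.mul_assoc, ← Matrix.mul_assoc Gᵀ, hG, Qblk_mul_Qblk]
  calc G * Qblk * Gᵀ = G * (Qblk * Gᵀ * Qblk) * Qblk := by
        simp only [Matrix.mul_assoc, Qblk_mul_Qblk, Matrix.mul_one]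
    _ = Qblk := by rw [mul_eq_one_comm.mp hleft, Matrix.one_mul]

lemma lorentzForm_mul_lorentzForm_of_scaling {θ : ℝ} {G : Matrix (Fin (m + 1)) (Fin (m + 1)) ℝ}
    (hG : Gᵀ * Qblk * G = Qblk) {p x : Fin (m + 1) → ℝ} (hp : (θ • G)ᵀ *ᵥ p = x)
    (s : Fin (m + 1) → ℝ) :
    lorentzForm p * lorentzForm ((θ • G) *ᵥ s) = lorentzForm x * lorentzForm s := by
  have hs : (θ • G)ᵀ * Qblk * (θ • G) = θ ^ 2 • Qblk := by
    rw [transpose_smul, Matrix.smul_mul, Matrix.smul_mul, Matrix.mul_smul, hG, smul_smul, sq]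
  have hp' : (θ • G)ᵀᵀ * Qblk * (θ • G)ᵀ = θ ^ 2 • Qblk := by
    rw [transpose_transpose, transpose_smul, Matrix.smul_mul, Matrix.smul_mul, Matrix.mul_smul,
      mul_Qblk_mul_transpose hG, smul_smul, sq]
  rw [← hp, lorentzForm_mulVec hs, lorentzForm_mulVec hp']
  ring

end Lorentz

section Tblk

variable {m : ℕ} {u : Fin (m + 1) → ℝ}

lemma lorentzForm_pos (hu : tailNorm u < u 0) : 0 < lorentzForm u := by
  have hn : 0 ≤ tailNorm u := Real.sqrt_nonneg _
  have hsq : tailNorm u ^ 2 = tailNormSq u :=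
    Real.sq_sqrt (Finset.sum_nonneg fun _ _ => sq_nonneg _)
  rw [lorentzForm]
  nlinarith

lemma betaOf_sq (hu : tailNorm u < u 0) : betaOf u ^ 2 = lorentzForm u :=
  Real.sq_sqrt (lorentzForm_pos hu).le

lemma betaOf_pos (hu : tailNorm u < u 0) : 0 < betaOf u :=
  Real.sqrt_pos.mpr (lorentzForm_pos hu)

lemma Tblk_transpose (u : Fin (m + 1) → ℝ) : (Tblk u)ᵀ = Tblk u := by
  ext j j'
  rcases Fin.eq_zero_or_eq_succ j with rfl | ⟨a, rfl⟩ <;>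
    rcases Fin.eq_zero_or_eq_succ j' with rfl | ⟨b, rfl⟩ <;>
    simp only [transpose_apply, Tblk, of_apply, if_neg (Fin.succ_ne_zero _), ↓reduceIte,
      Fin.succ_inj]
  rw [mul_comm]
  simp only [@eq_comm _ b a]

lemma Tblk_mulVec_zero (u v : Fin (m + 1) → ℝ) : (Tblk u *ᵥ v) 0 = u ⬝ᵥ v := by
  simp [mulVec, dotProduct, Tblk]

lemma Tblk_mulVec_succ (u v : Fin (m + 1) → ℝ) (j : Fin m) :
    (Tblk u *ᵥ v) j.succ = betaOf u * v j.succ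
      + (v 0 + tailDot u v / (betaOf u + u 0)) * u j.succ := by
  simp only [mulVec, dotProduct, Fin.sum_univ_succ, Tblk, of_apply, if_neg (Fin.succ_ne_zero _),
    ↓reduceIte, Fin.succ_inj, add_mul, ite_mul, zero_mul, Finset.sum_add_distrib,
    Finset.sum_ite_eq, Finset.mem_univ, tailDot, Finset.sum_div, Finset.sum_mul]
  rw [Finset.sum_congr rfl fun l _ => (by ring : u j.succ * u l.succ / (betaOf u + u 0) * v l.succ
    = u l.succ * v l.succ / (betaOf u + u 0) * u j.succ)]
  ring

lemma tailDot_Tblk_mulVec (u v : Fin (m + 1) → ℝ) :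
    tailDot u (Tblk u *ᵥ v) = betaOf u * tailDot u v
      + (v 0 + tailDot u v / (betaOf u + u 0)) * tailNormSq u := by
  rw [← tailDot_self]
  simp only [tailDot, Tblk_mulVec_succ, mul_add, Finset.sum_add_distrib, Finset.mul_sum]
  congr 1 <;> exact Finset.sum_congr rfl fun _ _ => by ring

lemma Tblk_mul_Qblk_mul_Tblk (hu : tailNorm u < u 0) :
    Tblk u * Qblk * Tblk u = betaOf u ^ 2 • Qblk := by
  have hc : betaOf u + u 0 ≠ 0 :=
    (add_pos (betaOf_pos hu) ((Real.sqrt_nonneg _).trans_lt hu)).ne'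
  have hS : tailNormSq u = u 0 ^ 2 - betaOf u ^ 2 := by rw [betaOf_sq hu, lorentzForm]; ring
  rw [ext_iff_mulVec]
  intro v
  rw [← mulVec_mulVec, ← mulVec_mulVec, smul_mulVec]
  ext j
  rcases Fin.eq_zero_or_eq_succ j with rfl | ⟨j, rfl⟩
  · rw [Tblk_mulVec_zero, dotProduct_eq_mul_add_tailDot, tailDot_Qblk_mulVec, tailDot_Tblk_mulVec,
      Qblk_mulVec_apply, if_pos rfl, Tblk_mulVec_zero, dotProduct_eq_mul_add_tailDot,
      Pi.smul_apply, Qblk_mulVec_apply, if_pos rfl, smul_eq_mul, hS]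
    field_simp
    ring
  · rw [Tblk_mulVec_succ, tailDot_Qblk_mulVec, tailDot_Tblk_mulVec, Qblk_mulVec_apply,
      Qblk_mulVec_apply, if_pos rfl, if_neg (Fin.succ_ne_zero _), Tblk_mulVec_zero,
      Tblk_mulVec_succ, dotProduct_eq_mul_add_tailDot, Pi.smul_apply, Qblk_mulVec_apply,
      if_neg (Fin.succ_ne_zero _), smul_eq_mul, hS]
    field_simp
    ring

end Tblk

section BlockVectors

variable {k : ℕ} {d : Fin k → ℕ}

lemma blk_blockDiagonal'_mulVec (M : ∀ i, Matrix (Fin (d i + 1)) (Fin (d i + 1)) ℝ)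
    (v : Idx d → ℝ) (i : Fin k) : blk (blockDiagonal' M *ᵥ v) i = M i *ᵥ blk v i := by
  ext j
  simp [blk, mulVec, dotProduct, blockDiagonal'_apply, Fintype.sum_sigma]

lemma blk_jmul (p q : Idx d → ℝ) (i : Fin k) :
    blk (jmul p q) i = jordanBlk (blk p i) (blk q i) :=
  rfl

lemma blk_unitE (i : Fin k) : blk (unitE : Idx d → ℝ) i = Pi.single 0 1 := by
  ext j
  simp [blk, unitE, Pi.single_apply]

lemma jmul_unitE_left (w : Idx d → ℝ) : jmul unitE w = w := by
  funext ⟨i, j⟩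
  have hi : blk (jmul unitE w) i = blk w i := by rw [blk_jmul, blk_unitE, jordanBlk_single_left]
  exact congrFun hi j

lemma sum_sq_sub_smul_unitE (z : Idx d → ℝ) (μ : ℝ) :
    ∑ a, (z - μ • (unitE : Idx d → ℝ)) a ^ 2
      = ∑ i, (∑ j, blk z i j ^ 2 - 2 * μ * z ⟨i, 0⟩ + μ ^ 2) := by
  rw [Fintype.sum_sigma]
  refine Finset.sum_congr rfl fun i _ => ?_
  simp only [Fin.sum_univ_succ, Pi.sub_apply, Pi.smul_apply, smul_eq_mul, unitE,
    if_neg (Fin.succ_ne_zero _), ↓reduceIte, blk, mul_zero, sub_zero]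
  ring

lemma vnorm_sub_smul_unitE_le {z z' : Idx d → ℝ} (μ : ℝ) (h0 : ∀ i, z ⟨i, 0⟩ = z' ⟨i, 0⟩)
    (hsq : ∀ i, ∑ j, blk z i j ^ 2 ≤ ∑ j, blk z' i j ^ 2) :
    vnorm (z - μ • unitE) ≤ vnorm (z' - μ • unitE) := by
  refine Real.sqrt_le_sqrt ?_
  rw [sum_sq_sub_smul_unitE, sum_sq_sub_smul_unitE]
  exact Finset.sum_le_sum fun i _ => by rw [h0 i]; linarith [hsq i]

end BlockVectors

section Scaling

variable {k : ℕ} {d : Fin k → ℕ}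

lemma transpose_mulVec_inv_transpose_mulVec {ι : Type*} [Fintype ι] [DecidableEq ι]
    {D : Matrix ι ι ℝ} (hD : IsUnit D.det) (x : ι → ℝ) : Dᵀ *ᵥ ((D⁻¹)ᵀ *ᵥ x) = x := by
  rw [mulVec_mulVec, ← transpose_mul, nonsing_inv_mul D hD, transpose_one, one_mulVec]

lemma inv_transpose_mulVec_eq_of_transpose_mulVec {ι : Type*} [Fintype ι] [DecidableEq ι]
    {D : Matrix ι ι ℝ} (hD : IsUnit D.det) {p x : ι → ℝ} (hp : Dᵀ *ᵥ p = x) :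
    (D⁻¹)ᵀ *ᵥ x = p := by
  rw [← hp, mulVec_mulVec, ← transpose_mul, mul_nonsing_inv D hD, transpose_one, one_mulVec]

lemma isUnit_det_of_mem_scalingGroup {D : Matrix (Idx d) (Idx d) ℝ} (hD : D ∈ scalingGroup d) :
    IsUnit D.det := by
  obtain ⟨θ, G, hθ, hG, rfl⟩ := hD
  refine isUnit_det_of_left_inverse
    (B := blockDiagonal' fun i => (θ i)⁻¹ • (Qblk * (G i)ᵀ * Qblk)) ?_
  rw [← blockDiagonal'_mul, ← blockDiagonal'_one]
  congr 1
  funext i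
  rw [Matrix.smul_mul, Matrix.mul_smul, smul_smul, inv_mul_cancel₀ (hθ i).ne', one_smul,
    Matrix.mul_assoc, Matrix.mul_assoc, ← Matrix.mul_assoc (G i)ᵀ, hG, Qblk_mul_Qblk]
  rfl

lemma blk_scaling_invariants {D : Matrix (Idx d) (Idx d) ℝ} (hD : D ∈ scalingGroup d)
    (x s : Idx d → ℝ) (i : Fin k) :
    blk ((D⁻¹)ᵀ *ᵥ x) i ⬝ᵥ blk (D *ᵥ s) i = blk x i ⬝ᵥ blk s i ∧
      lorentzForm (blk ((D⁻¹)ᵀ *ᵥ x) i) * lorentzForm (blk (D *ᵥ s) i)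
        = lorentzForm (blk x i) * lorentzForm (blk s i) := by
  have hx := transpose_mulVec_inv_transpose_mulVec (isUnit_det_of_mem_scalingGroup hD) x
  obtain ⟨θ, G, -, hG, rfl⟩ := hD
  have hxi := congrArg (blk · i) hx
  simp only [blockDiagonal'_transpose, blk_blockDiagonal'_mulVec] at hxi
  rw [blk_blockDiagonal'_mulVec]
  refine ⟨?_, lorentzForm_mul_lorentzForm_of_scaling (hG i) hxi _⟩
  rw [← hxi, dotProduct_mulVec, ← mulVec_transpose]

lemma jmul_scaling_apply_zero {D : Matrix (Idx d) (Idx d) ℝ} (hD : D ∈ scalingGroup d)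
    (x s : Idx d → ℝ) (i : Fin k) :
    jmul ((D⁻¹)ᵀ *ᵥ x) (D *ᵥ s) ⟨i, 0⟩ = blk x i ⬝ᵥ blk s i :=
  (blk_scaling_invariants hD x s i).1

lemma le_sum_sq_blk_jmul_scaling {D : Matrix (Idx d) (Idx d) ℝ} (hD : D ∈ scalingGroup d)
    (x s : Idx d → ℝ) (i : Fin k) :
    2 * (blk x i ⬝ᵥ blk s i) ^ 2 - lorentzForm (blk x i) * lorentzForm (blk s i)
      ≤ ∑ j, blk (jmul ((D⁻¹)ᵀ *ᵥ x) (D *ᵥ s)) i j ^ 2 := by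
  obtain ⟨hdot, hdet⟩ := blk_scaling_invariants hD x s i
  rw [blk_jmul, ← hdot, ← hdet]
  exact two_mul_sq_sub_le_sum_sq_jordanBlk _ _

end Scaling

section ScalingByTV

variable {k : ℕ} {d : Fin k → ℕ} {x : Idx d → ℝ}

lemma blk_wxs (x s : Idx d → ℝ) (i : Fin k) : blk (wxs x s) i = Tblk (blk x i) *ᵥ blk s i :=
  blk_blockDiagonal'_mulVec _ _ _

lemma wxs_apply_zero (x s : Idx d → ℝ) (i : Fin k) : wxs x s ⟨i, 0⟩ = blk x i ⬝ᵥ blk s i := by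
  rw [← Tblk_mulVec_zero, ← blk_wxs]
  rfl

lemma sum_sq_blk_wxs (hx : inIntK x) (s : Idx d → ℝ) (i : Fin k) :
    ∑ j, blk (wxs x s) i j ^ 2
      = 2 * (blk x i ⬝ᵥ blk s i) ^ 2 - lorentzForm (blk x i) * lorentzForm (blk s i) := by
  have hT : (Tblk (blk x i))ᵀ * Qblk * Tblk (blk x i) = betaOf (blk x i) ^ 2 • Qblk := by
    rw [Tblk_transpose, Tblk_mul_Qblk_mul_Tblk (hx i)]
  rw [blk_wxs, sum_sq_eq_two_mul_sq_sub_lorentzForm, Tblk_mulVec_zero, lorentzForm_mulVec hT,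
    betaOf_sq (hx i)]

lemma TV_mem_scalingGroup (hx : inIntK x) : TV x ∈ scalingGroup d := by
  refine ⟨fun i => betaOf (blk x i), fun i => (betaOf (blk x i))⁻¹ • Tblk (blk x i),
    fun i => betaOf_pos (hx i), fun i => ?_, ?_⟩
  · have hβ := (betaOf_pos (hx i)).ne'
    rw [transpose_smul, Tblk_transpose, Matrix.smul_mul, Matrix.smul_mul, Matrix.mul_smul,
      Tblk_mul_Qblk_mul_Tblk (hx i), smul_smul, smul_smul,
      show (betaOf (blk x i))⁻¹ * (betaOf (blk x i))⁻¹ * betaOf (blk x i) ^ 2 = 1 by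
        field_simp,
      one_smul]
  · unfold TV
    congr 1
    funext i
    rw [smul_smul, mul_inv_cancel₀ (betaOf_pos (hx i)).ne', one_smul]

lemma TV_transpose (x : Idx d → ℝ) : (TV x)ᵀ = TV x := by
  simp only [TV, blockDiagonal'_transpose, Tblk_transpose]

lemma TV_mulVec_unitE (x : Idx d → ℝ) : TV x *ᵥ unitE = x := by
  funext ⟨i, j⟩
  have hi : blk (TV x *ᵥ unitE) i = blk x i := by
    rw [TV, blk_blockDiagonal'_mulVec, blk_unitE, mulVec_single_one]
    ext j
    rcases Fin.eq_zero_or_eq_succ j with rfl | ⟨j, rfl⟩ <;> simp [Tblk, Fin.succ_ne_zero]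
  exact congrFun hi j

lemma wxs_eq_jmul_TV (hx : inIntK x) (s : Idx d → ℝ) :
    wxs x s = jmul (((TV x)⁻¹)ᵀ *ᵥ x) (TV x *ᵥ s) := by
  have he : ((TV x)⁻¹)ᵀ *ᵥ x = unitE :=
    inv_transpose_mulVec_eq_of_transpose_mulVec
      (isUnit_det_of_mem_scalingGroup (TV_mem_scalingGroup hx))
      (by rw [TV_transpose, TV_mulVec_unitE])
  rw [he, jmul_unitE_left]
  rfl

end ScalingByTV

theorem d2_min_over_scalings_general {k : ℕ} {d : Fin k → ℕ}
    (x s : Idx d → ℝ) (hx : inIntK x) :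
    (∀ D ∈ scalingGroup d,
      vnorm (wxs x s - muV x s • unitE)
        ≤ vnorm (jmul ((D⁻¹)ᵀ.mulVec x) (D.mulVec s) - muV x s • unitE)) ∧
    (∃ D ∈ scalingGroup d,
      vnorm (wxs x s - muV x s • unitE)
        = vnorm (jmul ((D⁻¹)ᵀ.mulVec x) (D.mulVec s) - muV x s • unitE)) := by
  refine ⟨fun D hD => vnorm_sub_smul_unitE_le _ (fun i => ?_) (fun i => ?_),
    TV x, TV_mem_scalingGroup hx, by rw [← wxs_eq_jmul_TV hx]⟩
  · rw [wxs_apply_zero, jmul_scaling_apply_zero hD]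
  · rw [sum_sq_blk_wxs hx]
    exact le_sum_sq_blk_jmul_scaling hD x s i

/-- Lemma 9: `‖w_{xs} - μe‖` is the minimum of `‖(D⁻ᵀx) ∘ (Ds) - μe‖` over the scaling
group. -/
theorem d2_min_over_scalings {k : ℕ} {d : Fin k → ℕ} (hk : 0 < k)
    (x s : Idx d → ℝ) (hx : inIntK x) (hs : inIntK s) :
    (∀ D ∈ scalingGroup d,
      vnorm (wxs x s - muV x s • unitE)
        ≤ vnorm (jmul ((D⁻¹)ᵀ.mulVec x) (D.mulVec s) - muV x s • unitE)) ∧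
    (∃ D ∈ scalingGroup d,
      vnorm (wxs x s - muV x s • unitE)
        = vnorm (jmul ((D⁻¹)ᵀ.mulVec x) (D.mulVec s) - muV x s • unitE)) :=
  d2_min_over_scalings_general x s hx

end SOCP
end

section
/- Consider a current SOCP with data (A, b) and a previous SOCP with data (A_o, b_o), with ΔA = A − A_o and Δb = b − b_o, and let (x_o, y_o, s_o) be any point for the previous problem with previous primal residual r_p^o = A_o x_o − b_o. Let q_c = (e, 0, e, 1, 1) be the cold-starting point and q_w the warm-starting point with x_w = ω x_o + (1−ω) e and τ_w = 1, for ω ∈ [0,1]. If ‖ΔA‖ ‖x_o‖ ≤ c_A ‖r_p(q_c)‖, ‖Δb‖ ≤ c_b ‖r_p(q_c)‖, ‖r_p^o‖ ≤ c_p ‖r_p(q_c)‖, and c_A + c_b + c_p ≤ 1, then ‖r_p(q_w)‖ ≤ (1 − ω(1 − c_A − c_b − c_p)) ‖r_p(q_c)‖. -/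
open scoped BigOperators
open Matrix

namespace SOCP

/-! With `τ_w = 1` the warm-start residual is the convex combination
`ω (A x_o - b) + (1 - ω) r_p(q_c)`, and `A x_o - b = ΔA x_o + r_p^o - Δb`, whose norm the
triangle inequality bounds by `(c_A + c_b + c_p) ‖r_p(q_c)‖`. -/

section EuclideanNorm

variable {ι : Type*} [Fintype ι]

theorem vnorm_eq_norm_toLp (v : ι → ℝ) : vnorm v = ‖WithLp.toLp 2 v‖ := by
  simp [vnorm, EuclideanSpace.norm_eq, sq_abs]

theorem vnorm_add_le (u v : ι → ℝ) : vnorm (u + v) ≤ vnorm u + vnorm v := by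
  simpa only [vnorm_eq_norm_toLp, WithLp.toLp_add] using norm_add_le _ _

theorem vnorm_sub_le (u v : ι → ℝ) : vnorm (u - v) ≤ vnorm u + vnorm v := by
  simpa only [vnorm_eq_norm_toLp, WithLp.toLp_sub] using norm_sub_le _ _

theorem vnorm_smul (c : ℝ) (v : ι → ℝ) : vnorm (c • v) = |c| * vnorm v := by
  simp only [vnorm_eq_norm_toLp, WithLp.toLp_smul, norm_smul, Real.norm_eq_abs]

theorem vnorm_convexComb_le {t : ℝ} (ht : t ∈ Set.Icc (0 : ℝ) 1) (u v : ι → ℝ) :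
    vnorm (t • u + (1 - t) • v) ≤ t * vnorm u + (1 - t) * vnorm v := by
  obtain ⟨ht0, ht1⟩ := ht
  calc vnorm (t • u + (1 - t) • v) ≤ vnorm (t • u) + vnorm ((1 - t) • v) := vnorm_add_le _ _
    _ = t * vnorm u + (1 - t) * vnorm v := by
      rw [vnorm_smul, vnorm_smul, abs_of_nonneg ht0, abs_of_nonneg (sub_nonneg.2 ht1)]

theorem vnorm_mulVec_le {κ : Type*} [Fintype κ] [DecidableEq ι] (M : Matrix κ ι ℝ)
    (v : ι → ℝ) : vnorm (M *ᵥ v) ≤ op2 M * vnorm v := by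
  rw [vnorm_eq_norm_toLp, vnorm_eq_norm_toLp]
  exact (LinearMap.toContinuousLinearMap (Matrix.toEuclideanLin M)).le_opNorm (WithLp.toLp 2 v)

end EuclideanNorm

theorem mulVec_convexComb_sub {R m n : Type*} [CommRing R] [Fintype n] (A : Matrix m n R)
    (b : m → R) (t : R) (x y : n → R) :
    A *ᵥ (t • x + (1 - t) • y) - b = t • (A *ᵥ x - b) + (1 - t) • (A *ᵥ y - b) := by
  rw [mulVec_add, mulVec_smul, mulVec_smul]
  module

theorem vnorm_residual_le_of_perturbation {m n : Type*} [Fintype m] [Fintype n] [DecidableEq n]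
    (A Ao : Matrix m n ℝ) (b bo : m → ℝ) (x : n → ℝ) :
    vnorm (A *ᵥ x - b) ≤ op2 (A - Ao) * vnorm x + vnorm (Ao *ᵥ x - bo) + vnorm (b - bo) := by
  have hsplit : A *ᵥ x - b = ((A - Ao) *ᵥ x + (Ao *ᵥ x - bo)) - (b - bo) := by
    rw [sub_mulVec]
    abel
  calc vnorm (A *ᵥ x - b)
      ≤ vnorm ((A - Ao) *ᵥ x) + vnorm (Ao *ᵥ x - bo) + vnorm (b - bo) := by
        rw [hsplit]
        linarith [vnorm_sub_le ((A - Ao) *ᵥ x + (Ao *ᵥ x - bo)) (b - bo),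
          vnorm_add_le ((A - Ao) *ᵥ x) (Ao *ᵥ x - bo)]
    _ ≤ op2 (A - Ao) * vnorm x + vnorm (Ao *ᵥ x - bo) + vnorm (b - bo) := by
        gcongr
        exact vnorm_mulVec_le _ _

theorem warm_start_primal_residual_general {k p : ℕ} {d : Fin k → ℕ}
    (A Ao : Matrix (Fin p) (Idx d) ℝ) (b bo : Fin p → ℝ)
    (xo : Idx d → ℝ)
    (ω cA cb cp : ℝ) (hω : ω ∈ Set.Icc (0 : ℝ) 1)
    (hA : op2 (A - Ao) * vnorm xo ≤ cA * vnorm (A.mulVec unitE - b))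
    (hb : vnorm (b - bo) ≤ cb * vnorm (A.mulVec unitE - b))
    (hrp : vnorm (Ao.mulVec xo - bo) ≤ cp * vnorm (A.mulVec unitE - b)) :
    vnorm (A.mulVec (ω • xo + (1 - ω) • unitE) - b)
      ≤ (1 - ω * (1 - cA - cb - cp)) * vnorm (A.mulVec unitE - b) := by
  set R := vnorm (A *ᵥ unitE - b)
  have hxo : vnorm (A *ᵥ xo - b) ≤ (cA + cb + cp) * R := by
    linarith [vnorm_residual_le_of_perturbation A Ao b bo xo]
  calc vnorm (A *ᵥ (ω • xo + (1 - ω) • unitE) - b)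
      ≤ ω * vnorm (A *ᵥ xo - b) + (1 - ω) * R := by
        rw [mulVec_convexComb_sub]
        exact vnorm_convexComb_le hω _ _
    _ ≤ ω * ((cA + cb + cp) * R) + (1 - ω) * R := by gcongr; exact hω.1
    _ = (1 - ω * (1 - cA - cb - cp)) * R := by ring

/-- Warm starting improves the primal residual: if the previous primal residual and the
problem-data differences are small, the warm-started primal residual is reduced by the
factor `1 - ω(1 - c_A - c_b - c_p)` relative to cold starting. -/
theorem warm_start_primal_residual {k p : ℕ} {d : Fin k → ℕ}
    (A Ao : Matrix (Fin p) (Idx d) ℝ) (b bo : Fin p → ℝ)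
    (xo so : Idx d → ℝ) (yo : Fin p → ℝ)
    (ω cA cb cp : ℝ) (hω : ω ∈ Set.Icc (0 : ℝ) 1)
    (hA : op2 (A - Ao) * vnorm xo ≤ cA * vnorm (A.mulVec unitE - b))
    (hb : vnorm (b - bo) ≤ cb * vnorm (A.mulVec unitE - b))
    (hrp : vnorm (Ao.mulVec xo - bo) ≤ cp * vnorm (A.mulVec unitE - b))
    (hsum : cA + cb + cp ≤ 1) :
    vnorm (A.mulVec (ω • xo + (1 - ω) • unitE) - b)
      ≤ (1 - ω * (1 - cA - cb - cp)) * vnorm (A.mulVec unitE - b) :=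
  warm_start_primal_residual_general A Ao b bo xo ω cA cb cp hω hA hb hrp

end SOCP
end
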